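/- Let Δ be a 2-local derivation on M_n(A), n ≥ 2, vanishing on the span of the matrix units, and let x = Σ_{i=1}^n x_{i,i} be a diagonal matrix. Then e_{k,k}Δ(x)e_{k,k} = Δ(x_{k,k}) for each k, where x_{k,k} is viewed as the matrix with (k,k)-entry x_{k,k} and zeros elsewhere. -/

import Mathlib

open Matrix

def IsDerivation {A : Type*} [Ring A] [Algebra ℂ A] (D : A → A) : Prop :=
  (∀ x y, D (x + y) = D x + D y) ∧ (∀ (c : ℂ) (x), D (c • x) = c • D x) ∧
  (∀ x y, D (x * y) = D x * y + x * D y)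

def Is2LocalDerivation {A : Type*} [Ring A] [Algebra ℂ A] (Δ : A → A) : Prop :=
  ∀ x y, ∃ D, IsDerivation D ∧ Δ x = D x ∧ Δ y = D y

def HasInnerDerivationProperty (A : Type*) [Ring A] [Algebra ℂ A] : Prop :=
  ∀ D : A → A, IsDerivation D → ∃ a : A, ∀ x, D x = a * x - x * a

/-- `Δ` vanishes on the linear span of the matrix units. -/
def VanishesOnUnits {A : Type*} [Ring A] [Algebra ℂ A] {n : ℕ}
    (Δ : Matrix (Fin n) (Fin n) A → Matrix (Fin n) (Fin n) A) : Prop :=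
  ∀ x ∈ Submodule.span ℂ (Set.range fun p : Fin n × Fin n =>
      Matrix.single p.1 p.2 (1 : A)), Δ x = 0

/-!
Let `e = e_{k,k}`; it is idempotent and commutes with the diagonal matrix `x`, so `e x e = e x`.
For a derivation `D`, differentiating `e = e e` gives `e D(e) e = 0`, whence
`e D(e x e) e = e D(x) e`. Taking `D` to agree with `Δ` at `x` and `e x e` gives
`e Δ(e x e) e = e Δ(x) e`. Taking `D` to agree with `Δ` at `e x e` and `e` gives `D e = 0`,
hence `Δ(e x e) = D(e x e) = e D(x) e`, which is fixed by `e (·) e`.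
-/

section LeibnizRule

variable {R : Type*} [Ring R] {D : R → R} {e : R}

theorem mul_apply_mul_eq_zero_of_isIdempotentElem
    (hD : ∀ a b, D (a * b) = D a * b + a * D b) (he : IsIdempotentElem e) :
    e * D e * e = 0 := by
  have hDe : D e = D e * e + e * D e := by simpa only [he.eq] using hD e e
  have h : e * D e * e = e * D e * e + e * D e * e := calc
    e * D e * e = e * (D e * e + e * D e) * e := by rw [← hDe]
    _ = e * D e * (e * e) + e * e * D e * e := by noncomm_ring
    _ = e * D e * e + e * D e * e := by rw [he.eq]
  exact left_eq_add.mp h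

theorem mul_apply_mul_mul_mul_eq_of_commute
    (hD : ∀ a b, D (a * b) = D a * b + a * D b) (he : IsIdempotentElem e) {x : R}
    (hx : Commute e x) : e * D (e * x * e) * e = e * D x * e := by
  have hexe : e * x * e = e * x := by rw [mul_assoc, ← hx.eq, ← mul_assoc, he.eq]
  rw [hexe, hD]
  calc e * (D e * x + e * D x) * e
      = e * D e * (x * e) + e * e * D x * e := by noncomm_ring
    _ = e * D e * e * x + e * D x * e := by rw [← hx.eq, ← mul_assoc, he.eq]
    _ = e * D x * e := by rw [mul_apply_mul_eq_zero_of_isIdempotentElem hD he, zero_mul, zero_add]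

theorem apply_mul_mul_of_apply_eq_zero
    (hD : ∀ a b, D (a * b) = D a * b + a * D b) (hDe : D e = 0) (y : R) :
    D (e * y * e) = e * D y * e := by
  simp [hD, hDe]

end LeibnizRule

namespace Is2LocalDerivation

variable {R : Type*} [Ring R] [Algebra ℂ R] {Δ : R → R} {e : R}

theorem mul_apply_mul_mul_mul_eq_of_commute (hΔ : Is2LocalDerivation Δ)
    (he : IsIdempotentElem e) {x : R} (hx : Commute e x) :
    e * Δ (e * x * e) * e = e * Δ x * e := by
  obtain ⟨D, hD, hDx, hDexe⟩ := hΔ x (e * x * e)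
  rw [hDx, hDexe]
  exact _root_.mul_apply_mul_mul_mul_eq_of_commute hD.2.2 he hx

theorem mul_apply_mul_mul_mul_eq_apply_of_apply_eq_zero (hΔ : Is2LocalDerivation Δ)
    (he : IsIdempotentElem e) (hΔe : Δ e = 0) (y : R) :
    e * Δ (e * y * e) * e = Δ (e * y * e) := by
  obtain ⟨D, hD, hDeye, hDe⟩ := hΔ (e * y * e) e
  rw [hDeye, apply_mul_mul_of_apply_eq_zero hD.2.2 (hDe ▸ hΔe)]
  calc e * (e * D y * e) * e = e * e * D y * (e * e) := by noncomm_ring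
    _ = e * D y * e := by rw [he.eq]

end Is2LocalDerivation

theorem Matrix.isIdempotentElem_single_one {m A : Type*} [DecidableEq m] [Fintype m]
    [Semiring A] (k : m) : IsIdempotentElem (single k k (1 : A)) := by
  simp [IsIdempotentElem, single_mul_single_same]

theorem Matrix.IsDiag.commute_single_one {m A : Type*} [DecidableEq m] [Fintype m]
    [Semiring A] {x : Matrix m m A} (hx : x.IsDiag) (k : m) :
    Commute (single k k (1 : A)) x := by
  rw [← hx.diagonal_diag, ← diagonal_single, commute_iff_eq, diagonal_mul_diagonal,
    diagonal_mul_diagonal]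
  congr 1 with i
  rcases eq_or_ne i k with rfl | hi
  · simp
  · simp [hi]

theorem stmt7_general {A : Type*} [NormedRing A] [NormedAlgebra ℂ A] {n : ℕ}
    (Δ : Matrix (Fin n) (Fin n) A → Matrix (Fin n) (Fin n) A)
    (hΔ : Is2LocalDerivation Δ) (hvan : VanishesOnUnits Δ)
    (x : Matrix (Fin n) (Fin n) A) (hx : ∀ i j : Fin n, i ≠ j → x i j = 0)
    (k : Fin n) :
    Matrix.single k k (1 : A) * Δ x * Matrix.single k k (1 : A) =
      Δ (Matrix.single k k (1 : A) * x * Matrix.single k k (1 : A)) := by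
  have he := isIdempotentElem_single_one (A := A) k
  have hΔe : Δ (single k k 1) = 0 := hvan _ (Submodule.subset_span ⟨(k, k), rfl⟩)
  rw [← hΔ.mul_apply_mul_mul_mul_eq_of_commute he (IsDiag.commute_single_one hx k),
    hΔ.mul_apply_mul_mul_mul_eq_apply_of_apply_eq_zero he hΔe]

theorem stmt7 {A : Type*} [NormedRing A] [NormedAlgebra ℂ A] [CompleteSpace A]
    (hidp : HasInnerDerivationProperty A) {n : ℕ} (hn : 2 ≤ n)
    (Δ : Matrix (Fin n) (Fin n) A → Matrix (Fin n) (Fin n) A)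
    (hΔ : Is2LocalDerivation Δ) (hvan : VanishesOnUnits Δ)
    (x : Matrix (Fin n) (Fin n) A) (hx : ∀ i j : Fin n, i ≠ j → x i j = 0)
    (k : Fin n) :
    Matrix.single k k (1 : A) * Δ x * Matrix.single k k (1 : A) =
      Δ (Matrix.single k k (1 : A) * x * Matrix.single k k (1 : A)) :=
  stmt7_general Δ hΔ hvan x hx k
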